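/- If a permutation w ∈ S_N contains a pattern π ∈ S_n with n < N, then there exist an index i and value k such that w = I_i^k(v) for some v ∈ S_{N-1} that still contains π; consequently w can be obtained from π by a sequence of insertions. -/

import Mathlib

/-! Since `n < N + 1`, some position `i` of `w` is missed by an occurrence of `π`. Deleting the
entry `w i` and standardizing the remaining values gives `v ∈ S_N` with `w = I_i^{w i}(v)`, and the
occurrence of `π` survives the deletion because `succAbove` is an order embedding on positions as
well as on values. -/

/-- Pattern containment. -/
def ContainsPattern {N n : ℕ} (W : Equiv.Perm (Fin N)) (w : Equiv.Perm (Fin n)) : Prop :=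
  ∃ f : Fin n → Fin N, StrictMono f ∧ ∀ a b, W (f a) < W (f b) ↔ w a < w b

/-- The insertion `I_i^k(v)`: place the value `k` at position `i`, and at all
other positions use the values of `v` with each value `≥ k` increased by one. -/
def insertFun {n : ℕ} (w : Equiv.Perm (Fin n)) (i k : Fin (n + 1)) :
    Fin (n + 1) → Fin (n + 1) :=
  i.insertNth k fun j => k.succAbove (w j)

namespace Equiv.Perm

variable {N n : ℕ}

def removeAt (w : Perm (Fin (N + 1))) (i : Fin (N + 1)) : Perm (Fin N) :=
  (finSuccAboveEquiv i).trans
    ((w.subtypeEquiv (p := (· ≠ i)) (q := (· ≠ w i)) fun _ => w.injective.ne_iff.symm).trans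
      (finSuccAboveEquiv (w i)).symm)

theorem succAbove_removeAt_apply (w : Perm (Fin (N + 1))) (i : Fin (N + 1)) (j : Fin N) :
    (w i).succAbove (w.removeAt i j) = w (i.succAbove j) := by
  simp only [removeAt, Equiv.trans_apply]
  exact congrArg Subtype.val ((finSuccAboveEquiv (w i)).apply_symm_apply _)

theorem insertFun_removeAt (w : Perm (Fin (N + 1))) (i : Fin (N + 1)) :
    insertFun (w.removeAt i) i (w i) = w := by
  funext j
  rcases eq_or_ne j i with rfl | hj
  · exact Fin.insertNth_apply_same _ _ _
  · obtain ⟨j, rfl⟩ := Fin.exists_succAbove_eq hj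
    rw [insertFun, Fin.insertNth_apply_succAbove, succAbove_removeAt_apply]

theorem containsPattern_removeAt {w : Perm (Fin (N + 1))} {π : Perm (Fin n)} {i : Fin (N + 1)}
    {f : Fin n → Fin (N + 1)} (hf : StrictMono f) (hpat : ∀ a b, w (f a) < w (f b) ↔ π a < π b)
    (hi : ∀ a, f a ≠ i) : ContainsPattern (w.removeAt i) π := by
  choose g hg using fun a => Fin.exists_succAbove_eq (hi a)
  refine ⟨g, fun a b hab => ?_, fun a b => ?_⟩
  · rw [← Fin.succAbove_lt_succAbove_iff (p := i), hg, hg]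
    exact hf hab
  · rw [← Fin.succAbove_lt_succAbove_iff (p := w i), succAbove_removeAt_apply,
      succAbove_removeAt_apply, hg, hg, hpat]

end Equiv.Perm

theorem ContainsPattern.exists_removeAt {N n : ℕ} {w : Equiv.Perm (Fin (N + 1))}
    {π : Equiv.Perm (Fin n)} (h : ContainsPattern w π) (hn : n < N + 1) : ∃ i, ContainsPattern (w.removeAt i) π := by
  obtain ⟨f, hf, hpat⟩ := h
  obtain ⟨i, hi⟩ : ∃ i, i ∉ Set.range f := by
    by_contra! hsurj
    exact hn.not_ge (by simpa using Fintype.card_le_of_surjective f fun i => hsurj i)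
  exact ⟨i, Equiv.Perm.containsPattern_removeAt hf hpat fun a hai => hi ⟨a, hai⟩⟩

/-- If `w ∈ S_{N+1}` contains a pattern `π ∈ S_n` with `n < N + 1`, then
`w = I_i^k(v)` for some position `i`, value `k`, and `v ∈ S_N` which still
contains `π` (hence, iterating, `w` is obtained from `π` by insertions). -/
theorem exists_insertion_of_properly_contains {N n : ℕ}
    (w : Equiv.Perm (Fin (N + 1))) (π : Equiv.Perm (Fin n))
    (hn : n < N + 1) (h : ContainsPattern w π) :
    ∃ (v : Equiv.Perm (Fin N)) (i k : Fin (N + 1)),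
      (∀ j, w j = insertFun v i k j) ∧ ContainsPattern v π := by
  obtain ⟨i, hv⟩ := h.exists_removeAt hn
  exact ⟨w.removeAt i, i, w i, fun j => by rw [Equiv.Perm.insertFun_removeAt], hv⟩
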